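/- Let δ₁ ≤ δ₂ and 0 ≤ s < t < ∞. Then 𝒢(δ₁, δ₂; s) ⊆ 𝒢(δ₁, δ₂; t), and equality 𝒢(δ₁, δ₂; s) = 𝒢(δ₁, δ₂; t) holds if and only if s ≥ n(δ₂ − δ₁). -/

import Mathlib

open MeasureTheory
open scoped BigOperators ENNReal

/-- A dyadic cube `2^{-j}([0,1)^n + k)` in `ℝⁿ`, encoded by its generation `j`
and its position `k`. -/
structure DyadicCube (n : ℕ) where
  j : ℤ
  k : Fin n → ℤ
deriving DecidableEq

namespace DyadicCube

variable {n : ℕ}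

/-- The side length `ℓ(Q) = 2^{-j}`. -/
noncomputable def len (Q : DyadicCube n) : ℝ := (2 : ℝ) ^ (-Q.j)

/-- The lower-left corner `x_Q = 2^{-j} k`. -/
noncomputable def corner (Q : DyadicCube n) (i : Fin n) : ℝ := (2 : ℝ) ^ (-Q.j) * Q.k i

/-- The volume `|Q| = 2^{-jn}`. -/
noncomputable def vol (Q : DyadicCube n) : ℝ := Q.len ^ (n : ℕ)

/-- The cube `Q` as a subset of `ℝⁿ`. -/
noncomputable def toSet (Q : DyadicCube n) : Set (Fin n → ℝ) :=
  {x | ∀ i, Q.corner i ≤ x i ∧ x i < Q.corner i + Q.len}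

/-- The Euclidean distance `|x_Q - x_R|` between the corners of two dyadic cubes. -/
noncomputable def cdist (Q R : DyadicCube n) : ℝ :=
  Real.sqrt (∑ i, (Q.corner i - R.corner i) ^ 2)

end DyadicCube

/-- `υ : 𝒟 → (0,∞)` is a `(δ₁, δ₂; ω)`-order growth function: it is positive and
`υ(Q)/υ(R) ≤ C (1 + |x_Q - x_R|/(ℓ(Q) ∨ ℓ(R)))^ω (|Q|/|R|)^{δ₁}` when `ℓ(Q) ≤ ℓ(R)`,
with exponent `δ₂` in place of `δ₁` when `ℓ(R) < ℓ(Q)`. -/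
def IsGrowthFunction (n : ℕ) (δ₁ δ₂ ω : ℝ) (υ : DyadicCube n → ℝ) : Prop :=
  (∀ Q, 0 < υ Q) ∧ ∃ C : ℝ, 0 < C ∧ ∀ Q R : DyadicCube n,
    υ Q / υ R ≤ C * (1 + Q.cdist R / max Q.len R.len) ^ ω *
      (if Q.len ≤ R.len then (Q.vol / R.vol) ^ δ₁ else (Q.vol / R.vol) ^ δ₂)

namespace GrowthAux

variable {n : ℕ}

lemma len_pos (Q : DyadicCube n) : 0 < Q.len := zpow_pos two_pos _

lemma vol_pos (Q : DyadicCube n) : 0 < Q.vol := pow_pos (len_pos Q) n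

lemma cdist_nonneg (Q R : DyadicCube n) : 0 ≤ Q.cdist R := Real.sqrt_nonneg _

lemma cdist_comm (Q R : DyadicCube n) : Q.cdist R = R.cdist Q := by
  unfold DyadicCube.cdist
  congr 1
  exact Finset.sum_congr rfl fun i _ => by ring

lemma cdist_eq_dist (Q R : DyadicCube n) :
    Q.cdist R = dist ((WithLp.equiv 2 (Fin n → ℝ)).symm Q.corner)
      ((WithLp.equiv 2 (Fin n → ℝ)).symm R.corner) := by
  rw [EuclideanSpace.dist_eq]
  unfold DyadicCube.cdist
  congr 1
  exact Finset.sum_congr rfl fun i _ => by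
    simp [Real.dist_eq, sq_abs]

lemma cdist_triangle (Q S R : DyadicCube n) : Q.cdist R ≤ Q.cdist S + S.cdist R := by
  rw [cdist_eq_dist, cdist_eq_dist, cdist_eq_dist]
  exact dist_triangle _ _ _

lemma one_le_base (Q R : DyadicCube n) : 1 ≤ 1 + Q.cdist R / max Q.len R.len := by
  have h1 : 0 ≤ Q.cdist R := cdist_nonneg Q R
  have h2 : 0 < max Q.len R.len := lt_max_of_lt_left (len_pos Q)
  have := div_nonneg h1 h2.le
  linarith

lemma growth_mono {δ₁ δ₂ ω ω' : ℝ} {υ : DyadicCube n → ℝ} (h : ω ≤ ω')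
    (hυ : IsGrowthFunction n δ₁ δ₂ ω υ) : IsGrowthFunction n δ₁ δ₂ ω' υ := by
  obtain ⟨hpos, C, hC, hb⟩ := hυ
  refine ⟨hpos, C, hC, fun Q R => ?_⟩
  refine le_trans (hb Q R) ?_
  have hbase := one_le_base Q R
  have hpow : (1 + Q.cdist R / max Q.len R.len) ^ ω ≤
      (1 + Q.cdist R / max Q.len R.len) ^ ω' :=
    Real.rpow_le_rpow_of_exponent_le hbase h
  have hif : (0:ℝ) ≤ if Q.len ≤ R.len then (Q.vol / R.vol) ^ δ₁ else (Q.vol / R.vol) ^ δ₂ := by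
    split_ifs <;> exact Real.rpow_nonneg (div_nonneg (vol_pos Q).le (vol_pos R).le) _
  have h1 : C * (1 + Q.cdist R / max Q.len R.len) ^ ω ≤
      C * (1 + Q.cdist R / max Q.len R.len) ^ ω' :=
    mul_le_mul_of_nonneg_left hpow hC.le
  exact mul_le_mul_of_nonneg_right h1 hif

lemma rpow_sub_helper (x δ₁ δ₂ : ℝ) (hx : 0 < x) :
    x ^ (δ₂ - δ₁) = x ^ δ₂ * (x⁻¹) ^ δ₁ := by
  rw [Real.rpow_sub hx, Real.inv_rpow hx.le, div_eq_mul_inv]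

lemma alg1 (a b c δ₁ δ₂ : ℝ) (ha : 0 < a) (hb : 0 < b) (hc : 0 < c) :
    (a/c)^δ₁ * (c/b)^δ₂ = (a/b)^δ₁ * (c/b)^(δ₂-δ₁) := by
  have key : a/b * (b/c) = a/c := by field_simp
  rw [rpow_sub_helper _ _ _ (by positivity), inv_div, ← key,
    Real.mul_rpow (by positivity) (by positivity)]
  ring

lemma alg2 (a b c δ₁ δ₂ : ℝ) (ha : 0 < a) (hb : 0 < b) (hc : 0 < c) :
    (a/c)^δ₁ * (c/b)^δ₂ = (a/b)^δ₂ * (c/a)^(δ₂-δ₁) := by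
  have key : a/b * (c/a) = c/b := by field_simp
  rw [rpow_sub_helper _ _ _ (by positivity), inv_div, ← key,
    Real.mul_rpow (by positivity) (by positivity)]
  ring

lemma chain {δ₁ δ₂ s t : ℝ} {υ : DyadicCube n → ℝ} (hn : 0 < n) (hδ : δ₁ ≤ δ₂) (ht : 0 ≤ t)
    (hns : (n:ℝ) * (δ₂ - δ₁) ≤ s)
    (hυ : IsGrowthFunction n δ₁ δ₂ t υ) : IsGrowthFunction n δ₁ δ₂ s υ := by
  obtain ⟨hpos, C, hC, hb⟩ := hυ
  have hδ' : 0 ≤ δ₂ - δ₁ := sub_nonneg.mpr hδ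
  have hsqn : (0:ℝ) ≤ Real.sqrt n := Real.sqrt_nonneg _
  set c1 : ℝ := C * (1 + Real.sqrt n) ^ t with hc1
  set c2 : ℝ := C * (2 + Real.sqrt n) ^ t with hc2
  have hc1pos : 0 < c1 := mul_pos hC (Real.rpow_pos_of_pos (by linarith) _)
  have hc2pos : 0 < c2 := mul_pos hC (Real.rpow_pos_of_pos (by linarith) _)
  refine ⟨hpos, c1 * c2 * 2 ^ ((n:ℝ) * (δ₂ - δ₁)),
    mul_pos (mul_pos hc1pos hc2pos) (Real.rpow_pos_of_pos two_pos _), fun Q R => ?_⟩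
  set d := Q.cdist R with hd
  set L := max Q.len R.len with hLdef
  have hLpos : 0 < L := lt_max_of_lt_left (len_pos Q)
  have hd0 : 0 ≤ d := cdist_nonneg Q R
  set M := max L d with hM
  have hM0 : 0 < M := lt_max_of_lt_left hLpos
  set S : DyadicCube n := ⟨-(Int.clog 2 M), fun i => ⌊Q.corner i / (2:ℝ) ^ (Int.clog 2 M)⌋⟩
    with hSdef
  have hlenS : S.len = (2:ℝ) ^ (Int.clog 2 M) := by simp [DyadicCube.len, hSdef]
  have hSpos : 0 < S.len := len_pos S
  have hMle : M ≤ S.len := by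
    rw [hlenS]
    have := Int.self_le_zpow_clog (b := 2) (R := ℝ) (by norm_num) M
    simpa using this
  have hSle : S.len ≤ 2 * M := by
    rw [hlenS]
    have h := Int.zpow_pred_clog_lt_self (b := 2) (R := ℝ) (by norm_num) hM0
    have h2 : (2:ℝ) ^ (Int.clog 2 M) = 2 * (2:ℝ) ^ (Int.clog 2 M - 1) := by
      rw [zpow_sub_one₀ (by norm_num : (2:ℝ) ≠ 0)]; ring
    have h3 : ((2:ℕ):ℝ) ^ (Int.clog 2 M - 1) < M := h
    rw [h2]
    push_cast at h3
    linarith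
  have hcorner : ∀ i, S.corner i ≤ Q.corner i ∧ Q.corner i - S.corner i ≤ S.len := by
    intro i
    have h1 : S.corner i = S.len * ⌊Q.corner i / S.len⌋ := by
      rw [hlenS]; simp [DyadicCube.corner, hSdef]
    constructor
    · rw [h1]
      calc S.len * ⌊Q.corner i / S.len⌋ ≤ S.len * (Q.corner i / S.len) :=
            mul_le_mul_of_nonneg_left (Int.floor_le _) hSpos.le
        _ = Q.corner i := by field_simp
    · rw [h1]
      have h2 : Q.corner i / S.len < ⌊Q.corner i / S.len⌋ + 1 := Int.lt_floor_add_one _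
      have h3 := (div_lt_iff₀ hSpos).mp h2
      nlinarith
  have hQS : Q.cdist S ≤ Real.sqrt n * S.len := by
    have hsum : ∑ i, (Q.corner i - S.corner i)^2 ≤ (n:ℝ) * S.len^2 := by
      calc ∑ i, (Q.corner i - S.corner i)^2 ≤ ∑ _i : Fin n, S.len^2 := by
            apply Finset.sum_le_sum; intro i _
            have h := hcorner i
            nlinarith [h.1, h.2]
        _ = (n:ℝ) * S.len^2 := by
            rw [Finset.sum_const, Finset.card_univ, Fintype.card_fin, nsmul_eq_mul]
    calc Q.cdist S ≤ Real.sqrt ((n:ℝ) * S.len^2) := Real.sqrt_le_sqrt hsum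
      _ = Real.sqrt n * S.len := by
          rw [Real.sqrt_mul (Nat.cast_nonneg n), Real.sqrt_sq hSpos.le]
  have hQlenS : Q.len ≤ S.len := le_trans (le_trans (le_max_left _ _) (le_max_left _ _)) hMle
  have hRlenS : R.len ≤ S.len := le_trans (le_trans (le_max_right _ _) (le_max_left _ _)) hMle
  have hdM : d ≤ S.len := le_trans (le_max_right _ _) hMle
  have b1 : (1 + Q.cdist S / max Q.len S.len) ^ t ≤ (1 + Real.sqrt n) ^ t := by
    apply Real.rpow_le_rpow (by linarith [one_le_base Q S]) ?_ ht
    rw [max_eq_right hQlenS]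
    have : Q.cdist S / S.len ≤ Real.sqrt n := (div_le_iff₀ hSpos).mpr hQS
    linarith
  have hSR : S.cdist R ≤ d + Real.sqrt n * S.len := by
    calc S.cdist R ≤ S.cdist Q + Q.cdist R := cdist_triangle _ _ _
      _ = Q.cdist S + d := by rw [cdist_comm]
      _ ≤ d + Real.sqrt n * S.len := by linarith [hQS]
  have b2 : (1 + S.cdist R / max S.len R.len) ^ t ≤ (2 + Real.sqrt n) ^ t := by
    apply Real.rpow_le_rpow (by linarith [one_le_base S R]) ?_ ht
    rw [max_eq_left hRlenS]
    have : S.cdist R / S.len ≤ 1 + Real.sqrt n := by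
      rw [div_le_iff₀ hSpos]; nlinarith [hSR, hdM]
    linarith
  have e1 : υ Q / υ S ≤ c1 * (Q.vol / S.vol) ^ δ₁ := by
    have h := hb Q S
    rw [if_pos hQlenS] at h
    refine le_trans h ?_
    have h' : C * (1 + Q.cdist S / max Q.len S.len) ^ t ≤ c1 :=
      mul_le_mul_of_nonneg_left b1 hC.le
    exact mul_le_mul_of_nonneg_right h'
      (Real.rpow_nonneg (div_nonneg (vol_pos Q).le (vol_pos S).le) _)
  have e2 : υ S / υ R ≤ c2 * (S.vol / R.vol) ^ δ₂ := by
    have h := hb S R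
    have hif : (if S.len ≤ R.len then (S.vol/R.vol)^δ₁ else (S.vol/R.vol)^δ₂)
        ≤ (S.vol/R.vol)^δ₂ := by
      split_ifs with hc'
      · have hv : 1 ≤ S.vol / R.vol := by
          rw [le_div_iff₀ (vol_pos R)]
          simpa [DyadicCube.vol] using pow_le_pow_left₀ (len_pos R).le hRlenS n
        exact Real.rpow_le_rpow_of_exponent_le hv hδ
      · exact le_refl _
    refine le_trans h ?_
    have hifnn : (0:ℝ) ≤ if S.len ≤ R.len then (S.vol/R.vol)^δ₁ else (S.vol/R.vol)^δ₂ := by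
      split_ifs <;> exact Real.rpow_nonneg (div_nonneg (vol_pos S).le (vol_pos R).le) _
    exact mul_le_mul (mul_le_mul_of_nonneg_left b2 hC.le) hif hifnn hc2pos.le
  have hmul : (υ Q / υ S) * (υ S / υ R) = υ Q / υ R := by
    rw [div_mul_div_comm, mul_comm (υ Q) (υ S), mul_div_mul_left _ _ (hpos S).ne']
  have e3 : υ Q / υ R ≤ c1 * c2 * ((Q.vol/S.vol)^δ₁ * (S.vol/R.vol)^δ₂) := by
    rw [← hmul]
    calc (υ Q / υ S) * (υ S / υ R) ≤ (c1 * (Q.vol / S.vol) ^ δ₁) * (c2 * (S.vol / R.vol) ^ δ₂) :=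
          mul_le_mul e1 e2 (div_nonneg (hpos S).le (hpos R).le)
            (mul_nonneg hc1pos.le (Real.rpow_nonneg (div_nonneg (vol_pos Q).le (vol_pos S).le) _))
      _ = c1 * c2 * ((Q.vol/S.vol)^δ₁ * (S.vol/R.vol)^δ₂) := by ring
  -- key estimate on the extra factor
  have hSL : S.len / L ≤ 2 * (1 + d / L) := by
    rw [div_le_iff₀ hLpos]
    have hMLd : M ≤ L + d :=
      max_le (le_add_of_nonneg_right hd0) (le_add_of_nonneg_left hLpos.le)
    have heq : 2 * (1 + d/L) * L = 2 * (L + d) := by field_simp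
    rw [heq]
    linarith
  have hbase1 : (1:ℝ) ≤ 1 + d / L := by
    have := div_nonneg hd0 hLpos.le; linarith
  have key : (S.vol / L ^ n) ^ (δ₂ - δ₁) ≤ 2 ^ ((n:ℝ) * (δ₂ - δ₁)) * (1 + d/L) ^ s := by
    have hSx : S.vol / L ^ n = (S.len / L) ^ n := by
      rw [show S.vol = S.len ^ n from rfl, div_pow]
    rw [hSx]
    have hb0 : (0:ℝ) ≤ S.len / L := div_nonneg hSpos.le hLpos.le
    have h1 : (S.len/L)^n ≤ (2*(1+d/L))^n := pow_le_pow_left₀ hb0 hSL n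
    have h2 : ((S.len/L)^n)^(δ₂-δ₁) ≤ ((2*(1+d/L))^n)^(δ₂-δ₁) :=
      Real.rpow_le_rpow (by positivity) h1 hδ'
    refine h2.trans ?_
    rw [← Real.rpow_natCast (2*(1+d/L)) n, ← Real.rpow_mul (by linarith),
      Real.mul_rpow (by norm_num) (by linarith)]
    exact mul_le_mul_of_nonneg_left (Real.rpow_le_rpow_of_exponent_le hbase1 hns)
      (Real.rpow_nonneg (by norm_num) _)
  by_cases hQR : Q.len ≤ R.len
  · rw [if_pos hQR]
    have hLeq : L = R.len := max_eq_right hQR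
    have halg : (Q.vol/S.vol)^δ₁ * (S.vol/R.vol)^δ₂
        = (Q.vol/R.vol)^δ₁ * (S.vol/R.vol)^(δ₂-δ₁) :=
      alg1 _ _ _ _ _ (vol_pos Q) (vol_pos R) (vol_pos S)
    have hvolR : S.vol / R.vol = S.vol / L ^ n := by rw [hLeq]; rfl
    calc υ Q / υ R ≤ c1*c2*((Q.vol/S.vol)^δ₁*(S.vol/R.vol)^δ₂) := e3
      _ = c1*c2*((Q.vol/R.vol)^δ₁ * (S.vol/L^n)^(δ₂-δ₁)) := by rw [halg, hvolR]
      _ ≤ c1*c2*((Q.vol/R.vol)^δ₁ * (2^((n:ℝ)*(δ₂-δ₁)) * (1+d/L)^s)) := by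
          refine mul_le_mul_of_nonneg_left ?_ (mul_pos hc1pos hc2pos).le
          exact mul_le_mul_of_nonneg_left key
            (Real.rpow_nonneg (div_nonneg (vol_pos Q).le (vol_pos R).le) _)
      _ = c1*c2*2^((n:ℝ)*(δ₂-δ₁)) * (1+d/L)^s * (Q.vol/R.vol)^δ₁ := by ring
  · rw [if_neg hQR]
    have hLeq : L = Q.len := max_eq_left (le_of_not_ge hQR)
    have halg : (Q.vol/S.vol)^δ₁ * (S.vol/R.vol)^δ₂
        = (Q.vol/R.vol)^δ₂ * (S.vol/Q.vol)^(δ₂-δ₁) :=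
      alg2 _ _ _ _ _ (vol_pos Q) (vol_pos R) (vol_pos S)
    have hvolQ : S.vol / Q.vol = S.vol / L ^ n := by rw [hLeq]; rfl
    calc υ Q / υ R ≤ c1*c2*((Q.vol/S.vol)^δ₁*(S.vol/R.vol)^δ₂) := e3
      _ = c1*c2*((Q.vol/R.vol)^δ₂ * (S.vol/L^n)^(δ₂-δ₁)) := by rw [halg, hvolQ]
      _ ≤ c1*c2*((Q.vol/R.vol)^δ₂ * (2^((n:ℝ)*(δ₂-δ₁)) * (1+d/L)^s)) := by
          refine mul_le_mul_of_nonneg_left ?_ (mul_pos hc1pos hc2pos).le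
          exact mul_le_mul_of_nonneg_left key
            (Real.rpow_nonneg (div_nonneg (vol_pos Q).le (vol_pos R).le) _)
      _ = c1*c2*2^((n:ℝ)*(δ₂-δ₁)) * (1+d/L)^s * (Q.vol/R.vol)^δ₂ := by ring

noncomputable def exFun (n : ℕ) (δ₁ θ : ℝ) : DyadicCube n → ℝ :=
  fun Q => Q.vol ^ δ₁ * (Q.len + Q.cdist ⟨0, fun _ => 0⟩) ^ θ

lemma exFun_pos (δ₁ θ : ℝ) (Q : DyadicCube n) : 0 < exFun n δ₁ θ Q := by
  unfold exFun
  have h1 : 0 < Q.len + Q.cdist ⟨0, fun _ => 0⟩ :=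
    add_pos_of_pos_of_nonneg (len_pos Q) (cdist_nonneg _ _)
  exact mul_pos (Real.rpow_pos_of_pos (vol_pos Q) _) (Real.rpow_pos_of_pos h1 _)

lemma exFun_mem {δ₁ δ₂ t θ : ℝ} (hδ : δ₁ ≤ δ₂) (hθ0 : 0 ≤ θ) (hθt : θ ≤ t)
    (hθδ : θ ≤ (n:ℝ) * (δ₂ - δ₁)) :
    IsGrowthFunction n δ₁ δ₂ t (exFun n δ₁ θ) := by
  refine ⟨exFun_pos δ₁ θ, 1, one_pos, fun Q R => ?_⟩
  set O : DyadicCube n := ⟨0, fun _ => 0⟩ with hO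
  set aQ := Q.cdist O with haQ
  set aR := R.cdist O with haR
  set d := Q.cdist R with hd
  have haQ0 : 0 ≤ aQ := cdist_nonneg _ _
  have haR0 : 0 ≤ aR := cdist_nonneg _ _
  have hd0 : 0 ≤ d := cdist_nonneg _ _
  have htri : aQ ≤ d + aR := by
    calc aQ ≤ Q.cdist R + R.cdist O := cdist_triangle _ _ _
      _ = d + aR := rfl
  have hQp : 0 < Q.len + aQ := add_pos_of_pos_of_nonneg (len_pos Q) haQ0
  have hRp : 0 < R.len + aR := add_pos_of_pos_of_nonneg (len_pos R) haR0
  have hsplit : exFun n δ₁ θ Q / exFun n δ₁ θ R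
      = (Q.vol / R.vol) ^ δ₁ * ((Q.len + aQ) / (R.len + aR)) ^ θ := by
    unfold exFun
    rw [Real.div_rpow (vol_pos Q).le (vol_pos R).le, Real.div_rpow hQp.le hRp.le]
    rw [mul_div_mul_comm]
  rw [one_mul, hsplit]
  by_cases hQR : Q.len ≤ R.len
  · rw [if_pos hQR, max_eq_right hQR]
    rw [mul_comm ((Q.vol / R.vol) ^ δ₁) _]
    refine mul_le_mul_of_nonneg_right ?_
      (Real.rpow_nonneg (div_nonneg (vol_pos Q).le (vol_pos R).le) _)
    have hratio : (Q.len + aQ) / (R.len + aR) ≤ 1 + d / R.len := by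
      rw [div_le_iff₀ hRp]
      have hRpos := len_pos R
      have hexp : (1 + d / R.len) * (R.len + aR) = R.len + aR + d + aR * d / R.len := by
        field_simp; ring
      rw [hexp]
      have : 0 ≤ aR * d / R.len := by positivity
      linarith [hQR]
    calc ((Q.len + aQ) / (R.len + aR)) ^ θ ≤ (1 + d / R.len) ^ θ :=
          Real.rpow_le_rpow (by positivity) hratio hθ0
      _ ≤ (1 + d / R.len) ^ t := by
          refine Real.rpow_le_rpow_of_exponent_le ?_ hθt
          have : 0 ≤ d / R.len := div_nonneg hd0 (len_pos R).le
          linarith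
  · rw [if_neg hQR]
    have hRQ : R.len ≤ Q.len := le_of_not_ge hQR
    rw [max_eq_left hRQ]
    have hQpos := len_pos Q
    have hRpos := len_pos R
    have hratio : (Q.len + aQ) / (R.len + aR) ≤ (Q.len / R.len) * (1 + d / Q.len) := by
      rw [div_le_iff₀ hRp]
      have hexp : Q.len / R.len * (1 + d / Q.len) * (R.len + aR)
          = Q.len + Q.len * aR / R.len + (R.len + aR) * d / R.len := by
        field_simp
      rw [hexp]
      have h1 : Q.len + aR ≤ Q.len + Q.len * aR / R.len := by
        have : aR ≤ Q.len * aR / R.len := by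
          rw [le_div_iff₀ hRpos]
          nlinarith
        linarith
      have h2 : d ≤ (R.len + aR) * d / R.len := by
        rw [le_div_iff₀ hRpos]
        nlinarith
      linarith
    have hbase2 : (0:ℝ) ≤ Q.len / R.len * (1 + d / Q.len) := by positivity
    have step1 : ((Q.len + aQ) / (R.len + aR)) ^ θ
        ≤ (Q.len / R.len) ^ θ * (1 + d / Q.len) ^ θ := by
      rw [← Real.mul_rpow (by positivity) (by positivity)]
      exact Real.rpow_le_rpow (by positivity) hratio hθ0
    have hqr1 : (1:ℝ) ≤ Q.len / R.len := by
      rw [le_div_iff₀ hRpos]; linarith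
    have hd1 : (1:ℝ) ≤ 1 + d / Q.len := by
      have : 0 ≤ d / Q.len := div_nonneg hd0 hQpos.le
      linarith
    have step2 : (Q.len / R.len) ^ θ ≤ (Q.vol / R.vol) ^ (δ₂ - δ₁) := by
      have e : Q.vol / R.vol = (Q.len / R.len) ^ (n:ℕ) := by
        rw [show Q.vol = Q.len ^ n from rfl, show R.vol = R.len ^ n from rfl, div_pow]
      rw [e, ← Real.rpow_natCast (Q.len / R.len) n, ← Real.rpow_mul (by positivity)]
      exact Real.rpow_le_rpow_of_exponent_le hqr1 hθδ
    have step3 : (1 + d / Q.len) ^ θ ≤ (1 + d / Q.len) ^ t :=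
      Real.rpow_le_rpow_of_exponent_le hd1 hθt
    calc (Q.vol / R.vol) ^ δ₁ * ((Q.len + aQ) / (R.len + aR)) ^ θ
        ≤ (Q.vol / R.vol) ^ δ₁ * ((Q.vol / R.vol) ^ (δ₂ - δ₁) * (1 + d / Q.len) ^ t) := by
          refine mul_le_mul_of_nonneg_left ?_
            (Real.rpow_nonneg (div_nonneg (vol_pos Q).le (vol_pos R).le) _)
          refine le_trans step1 ?_
          exact mul_le_mul step2 step3 (Real.rpow_nonneg (by positivity) _)
            (Real.rpow_nonneg (div_nonneg (vol_pos Q).le (vol_pos R).le) _)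
      _ = (1 + d / Q.len) ^ t * (Q.vol / R.vol) ^ δ₂ := by
          rw [show δ₂ = δ₁ + (δ₂ - δ₁) by ring,
            Real.rpow_add (div_pos (vol_pos Q) (vol_pos R))]
          ring

lemma exFun_not_mem {δ₁ δ₂ s θ : ℝ} (hn : 0 < n) (hs0 : 0 ≤ s) (hθ : s < θ) :
    ¬ IsGrowthFunction n δ₁ δ₂ s (exFun n δ₁ θ) := by
  rintro ⟨-, C, hC, hb⟩
  obtain ⟨m, hm⟩ := exists_nat_gt (max 1 (C ^ (θ - s)⁻¹))
  have hm1 : (1:ℝ) < m := lt_of_le_of_lt (le_max_left _ _) hm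
  have hmC : C ^ (θ - s)⁻¹ < m := lt_of_le_of_lt (le_max_right _ _) hm
  set O : DyadicCube n := ⟨0, fun _ => 0⟩ with hO
  set Qm : DyadicCube n := ⟨0, fun _ => (m : ℤ)⟩ with hQm
  have hlenO : O.len = 1 := by simp [DyadicCube.len, hO]
  have hlenQ : Qm.len = 1 := by simp [DyadicCube.len, hQm]
  have hvolO : O.vol = 1 := by rw [show O.vol = O.len ^ n from rfl, hlenO, one_pow]
  have hvolQ : Qm.vol = 1 := by rw [show Qm.vol = Qm.len ^ n from rfl, hlenQ, one_pow]
  have hsqn1 : (1:ℝ) ≤ Real.sqrt n := by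
    rw [show (1:ℝ) = Real.sqrt 1 by simp]
    exact Real.sqrt_le_sqrt (by exact_mod_cast hn)
  have hcd : Qm.cdist O = m * Real.sqrt n := by
    unfold DyadicCube.cdist
    have : ∀ i : Fin n, (Qm.corner i - O.corner i) ^ 2 = (m:ℝ)^2 := by
      intro i; simp [DyadicCube.corner, hQm, hO]
    rw [Finset.sum_congr rfl (fun i _ => this i), Finset.sum_const, Finset.card_univ,
      Fintype.card_fin, nsmul_eq_mul, mul_comm, Real.sqrt_mul (by positivity),
      Real.sqrt_sq (by positivity)]
  have hself : O.cdist O = 0 := by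
    unfold DyadicCube.cdist; simp
  have h := hb Qm O
  rw [if_pos (by rw [hlenO, hlenQ])] at h
  have hexQ : exFun n δ₁ θ Qm = (1 + m * Real.sqrt n) ^ θ := by
    unfold exFun
    rw [hvolQ, hlenQ, Real.one_rpow, one_mul, ← hO, hcd]
  have hexO : exFun n δ₁ θ O = 1 := by
    unfold exFun
    rw [hvolO, hlenO, Real.one_rpow, one_mul, ← hO, hself, add_zero, Real.one_rpow]
  rw [hexQ, hexO, div_one, hvolQ, hvolO, div_one, Real.one_rpow, mul_one, hcd,
    hlenO, hlenQ, max_self, div_one] at h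
  -- h : (1 + m√n)^θ ≤ C * (1 + m√n)^s
  have hXpos : (0:ℝ) < 1 + m * Real.sqrt n := by nlinarith
  have hX1 : (1:ℝ) ≤ 1 + m * Real.sqrt n := by nlinarith
  have hmX : (m:ℝ) ≤ 1 + m * Real.sqrt n := by nlinarith
  have hlow : C < (1 + m * Real.sqrt n) ^ (θ - s) := by
    have hts : (0:ℝ) < θ - s := sub_pos.mpr hθ
    have h1 : C = (C ^ (θ - s)⁻¹) ^ (θ - s) :=
      (Real.rpow_inv_rpow hC.le hts.ne').symm
    rw [h1]
    exact Real.rpow_lt_rpow (Real.rpow_nonneg hC.le _) (lt_of_lt_of_le hmC hmX) hts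
  have hup : (1 + m * Real.sqrt n) ^ (θ - s) ≤ C := by
    have := h
    rw [Real.rpow_sub hXpos, div_le_iff₀ (Real.rpow_pos_of_pos hXpos s)]
    exact this
  linarith

end GrowthAux

/-- For `δ₁ ≤ δ₂` and `0 ≤ s < t < ∞`, one has
`𝒢(δ₁, δ₂; s) ⊆ 𝒢(δ₁, δ₂; t)`, and equality holds if and only if `s ≥ n(δ₂ - δ₁)`. -/


theorem growth_class_subset_and_eq_iff (n : ℕ) (hn : 0 < n) (δ₁ δ₂ s t : ℝ)
    (hδ : δ₁ ≤ δ₂) (hs : 0 ≤ s) (hst : s < t) :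
    ({υ : DyadicCube n → ℝ | IsGrowthFunction n δ₁ δ₂ s υ} ⊆
      {υ : DyadicCube n → ℝ | IsGrowthFunction n δ₁ δ₂ t υ}) ∧
    ({υ : DyadicCube n → ℝ | IsGrowthFunction n δ₁ δ₂ s υ} =
      {υ : DyadicCube n → ℝ | IsGrowthFunction n δ₁ δ₂ t υ} ↔ (n : ℝ) * (δ₂ - δ₁) ≤ s) := by
  have ht0 : 0 ≤ t := le_of_lt (lt_of_le_of_lt hs hst)
  refine ⟨fun υ hυ => GrowthAux.growth_mono hst.le hυ, ?_, ?_⟩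
  · intro heq
    by_contra hlt
    push_neg at hlt
    set θ := min t ((n:ℝ) * (δ₂ - δ₁)) with hθ
    have hθs : s < θ := lt_min hst hlt
    have h1 : IsGrowthFunction n δ₁ δ₂ t (GrowthAux.exFun n δ₁ θ) :=
      GrowthAux.exFun_mem hδ (le_of_lt (lt_of_le_of_lt hs hθs)) (min_le_left _ _)
        (min_le_right _ _)
    have h2 : GrowthAux.exFun n δ₁ θ ∈ {υ : DyadicCube n → ℝ | IsGrowthFunction n δ₁ δ₂ s υ} := by
      rw [heq]; exact h1
    exact GrowthAux.exFun_not_mem hn hs hθs h2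
  · intro h
    refine Set.Subset.antisymm (fun υ hυ => GrowthAux.growth_mono hst.le hυ)
      (fun υ hυ => GrowthAux.chain hn hδ ht0 h hυ)
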